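/- arXiv:nlin/0003020 — 6 statements merged into one kernel-verified Lean document; each statement's English description precedes it below -/
import Mathlib

section
/- The functions H_0 = (1/16)(-2u_2u_4 + 6u_0^2u_4 + u_3^2 - 12u_0u_1u_3 + 16u_0u_2^2 + 12u_1^2u_2 - 60u_0^3u_2 + 36u_0^5), H_1 = -(1/4)(2u_0u_4 - 2u_1u_3 + u_2^2 - 20u_0^2u_2 + 15u_0^4), and H_2 = u_4 - 10u_0u_2 - 5u_1^2 + 10u_0^3 are integrals of motion for the vector field X_1 on R^5 given by (du_0/dt, du_1/dt, du_2/dt, du_3/dt, du_4/dt) = (u_1, u_2, u_3, u_4, 10u_0u_3 + 20u_1u_2 - 30u_0^2u_1), i.e., the Lie derivative of each H_i along X_1 vanishes identically. -/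
noncomputable section

/-- Partial derivative of `H : ℝ⁵ → ℝ` at `u` in the `i`-th coordinate direction. -/
noncomputable def pd (H : (Fin 5 → ℝ) → ℝ) (u : Fin 5 → ℝ) (i : Fin 5) : ℝ :=
  fderiv ℝ H u (Pi.single i 1)

/-- The Hamiltonian `H₀` of the stationary KdV₅ system. -/
def H0 (u : Fin 5 → ℝ) : ℝ :=
  (1/16) * (-2*u 2*u 4 + 6*(u 0)^2*u 4 + (u 3)^2 - 12*u 0*u 1*u 3
    + 16*u 0*(u 2)^2 + 12*(u 1)^2*u 2 - 60*(u 0)^3*u 2 + 36*(u 0)^5)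

/-- The Hamiltonian `H₁` of the stationary KdV₅ system. -/
def H1 (u : Fin 5 → ℝ) : ℝ :=
  -(1/4) * (2*u 0*u 4 - 2*u 1*u 3 + (u 2)^2 - 20*(u 0)^2*u 2 + 15*(u 0)^4)

/-- The Hamiltonian `H₂` of the stationary KdV₅ system. -/
def H2 (u : Fin 5 → ℝ) : ℝ :=
  u 4 - 10*u 0*u 2 - 5*(u 1)^2 + 10*(u 0)^3

/-- The first vector field `X₁` of the stationary KdV₅ system. -/
def X1 (u : Fin 5 → ℝ) : Fin 5 → ℝ :=
  ![u 1, u 2, u 3, u 4, 10*u 0*u 3 + 20*u 1*u 2 - 30*(u 0)^2*u 1]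

/-- The third vector field `X₃` of the stationary KdV₅ system. -/
def X3 (u : Fin 5 → ℝ) : Fin 5 → ℝ :=
  ![(1/4)*(u 3 - 6*u 0*u 1),
    (1/4)*(u 4 - 6*u 0*u 2 - 6*(u 1)^2),
    (1/4)*(4*u 0*u 3 + 2*u 1*u 2 - 30*(u 0)^2*u 1),
    (1/4)*(4*u 0*u 4 + 6*u 1*u 3 + 2*(u 2)^2 - 30*(u 0)^2*u 2 - 60*u 0*(u 1)^2),
    (1/4)*(10*u 1*u 4 + 10*(u 0)^2*u 3 + 10*u 2*u 3 - 100*u 0*u 1*u 2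
      - 60*(u 1)^3 - 120*(u 0)^3*u 1)]

/-- The first Poisson tensor `P₀` of the stationary KdV₅ system. -/
def P0 (u : Fin 5 → ℝ) : Matrix (Fin 5) (Fin 5) ℝ :=
  !![0, 0, 0, 2, 0;
     0, 0, -2, 0, -20*u 0;
     0, 2, 0, 20*u 0, 20*u 1;
     -2, 0, -20*u 0, 0, -140*(u 0)^2 - 20*u 2;
     0, 20*u 0, -20*u 1, 140*(u 0)^2 + 20*u 2, 0]

/-- The second Poisson tensor `P₁` of the stationary KdV₅ system. -/
def P1 (u : Fin 5 → ℝ) : Matrix (Fin 5) (Fin 5) ℝ :=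
  !![0, 1/2, 0, 3*u 0, 6*u 1;
     -(1/2), 0, -3*u 0, -3*u 1, -4*u 2 - 15*(u 0)^2;
     0, 3*u 0, 0, u 2 + 15*(u 0)^2, u 3 + 30*u 0*u 1;
     -3*u 0, 3*u 1, -(u 2 + 15*(u 0)^2), 0, u 4 - 40*u 0*u 2 + 30*(u 1)^2 - 60*(u 0)^3;
     -6*u 1, 4*u 2 + 15*(u 0)^2, -(u 3 + 30*u 0*u 1),
       -(u 4 - 40*u 0*u 2 + 30*(u 1)^2 - 60*(u 0)^3), 0]

/-- One term of the cyclic Jacobi expression: `∑ₗ P_{il} ∂Q_{jk}/∂u_l`. -/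
noncomputable def jacTerm (P Q : (Fin 5 → ℝ) → Matrix (Fin 5) (Fin 5) ℝ)
    (u : Fin 5 → ℝ) (i j k : Fin 5) : ℝ :=
  ∑ l, P u i l * pd (fun v => Q v j k) u l

theorem sum_mul_pd_eq_fderiv (H : (Fin 5 → ℝ) → ℝ) (u X : Fin 5 → ℝ) :
    ∑ i, X i * pd H u i = fderiv ℝ H u X := by
  conv_rhs => rw [← Finset.univ_sum_single X, map_sum]
  refine Finset.sum_congr rfl fun i _ => ?_
  rw [pd, ← smul_eq_mul, ← map_smul, ← Pi.single_smul', smul_eq_mul, mul_one]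

/-- `H₀, H₁, H₂` are integrals of motion of the vector field `X₁` of KdV₅. -/
theorem stmt0 :
    (∀ u : Fin 5 → ℝ, ∑ i, X1 u i * pd H0 u i = 0) ∧
    (∀ u : Fin 5 → ℝ, ∑ i, X1 u i * pd H1 u i = 0) ∧
    (∀ u : Fin 5 → ℝ, ∑ i, X1 u i * pd H2 u i = 0) := by
  simp only [sum_mul_pd_eq_fderiv]
  refine ⟨fun u => ?_, fun u => ?_, fun u => ?_⟩ <;>
  · simp (disch := fun_prop) [H0.eq_unfold, H1.eq_unfold, H2.eq_unfold, X1, fderiv_fun_add,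
      fderiv_fun_sub, fderiv_fun_mul, fderiv_fun_pow, fderiv_apply]
    ring

end
end

section
/- The vector fields X_1 and X_3 of the stationary KdV_5 system commute: their Lie bracket [X_1, X_3] vanishes identically on R^5. -/
noncomputable section

/-! Both fields are polynomial, so their Jacobians `DX₁`, `DX₃` follow from the sum, product
and power rules for partial derivatives, and the bracket is `DX₃ X₁ - DX₁ X₃`. Its vanishing is
then the polynomial identity `DX₃ X₁ = DX₁ X₃`. -/

section pd
variable {f g : (Fin 5 → ℝ) → ℝ} {u : Fin 5 → ℝ} {i j : Fin 5} {c : ℝ}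

lemma pd_coord : pd (fun v => v j) u i = if j = i then 1 else 0 := by
  simp [pd, (hasFDerivAt_apply j u).fderiv, Pi.single_apply]

lemma pd_const : pd (fun _ => c) u i = 0 := by
  simp [pd]

lemma pd_add (hf : DifferentiableAt ℝ f u) (hg : DifferentiableAt ℝ g u) :
    pd (fun v => f v + g v) u i = pd f u i + pd g u i := by
  simp [pd, fderiv_fun_add hf hg]

lemma pd_sub (hf : DifferentiableAt ℝ f u) (hg : DifferentiableAt ℝ g u) :
    pd (fun v => f v - g v) u i = pd f u i - pd g u i := by
  simp [pd, fderiv_fun_sub hf hg]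

lemma pd_mul (hf : DifferentiableAt ℝ f u) (hg : DifferentiableAt ℝ g u) :
    pd (fun v => f v * g v) u i = pd f u i * g u + f u * pd g u i := by
  simp [pd, fderiv_fun_mul hf hg]
  ring

lemma pd_pow (hf : DifferentiableAt ℝ f u) (n : ℕ) :
    pd (fun v => f v ^ n) u i = n * f u ^ (n - 1) * pd f u i := by
  simp [pd, fderiv_fun_pow n hf]

end pd

open Matrix

def lieBracket (X Y : (Fin 5 → ℝ) → Fin 5 → ℝ) (u : Fin 5 → ℝ) (i : Fin 5) : ℝ :=
  ∑ j, (X u j * pd (fun v => Y v i) u j - Y u j * pd (fun v => X v i) u j)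

lemma lieBracket_eq_mulVec_sub_mulVec {X Y : (Fin 5 → ℝ) → Fin 5 → ℝ}
    {DX DY : Matrix (Fin 5) (Fin 5) ℝ} {u : Fin 5 → ℝ}
    (hX : ∀ i j, pd (fun v => X v i) u j = DX i j)
    (hY : ∀ i j, pd (fun v => Y v i) u j = DY i j) :
    lieBracket X Y u = DY *ᵥ X u - DX *ᵥ Y u := by
  ext i
  simp [lieBracket, hX, hY, Matrix.mulVec, dotProduct, mul_comm, Finset.sum_sub_distrib]

def jacX1 (u : Fin 5 → ℝ) : Matrix (Fin 5) (Fin 5) ℝ :=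
  !![0, 1, 0, 0, 0;
     0, 0, 1, 0, 0;
     0, 0, 0, 1, 0;
     0, 0, 0, 0, 1;
     10*u 3 - 60*u 0*u 1, 20*u 2 - 30*(u 0)^2, 20*u 1, 10*u 0, 0]

def jacX3 (u : Fin 5 → ℝ) : Matrix (Fin 5) (Fin 5) ℝ :=
  (1/4 : ℝ) • !![-6*u 1, -6*u 0, 0, 1, 0;
     -6*u 2, -12*u 1, -6*u 0, 0, 1;
     4*u 3 - 60*u 0*u 1, 2*u 2 - 30*(u 0)^2, 2*u 1, 4*u 0, 0;
     4*u 4 - 60*u 0*u 2 - 60*(u 1)^2, 6*u 3 - 120*u 0*u 1, 4*u 2 - 30*(u 0)^2, 6*u 1, 4*u 0;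
     20*u 0*u 3 - 100*u 1*u 2 - 360*(u 0)^2*u 1, 10*u 4 - 100*u 0*u 2 - 180*(u 1)^2 - 120*(u 0)^3,
       10*u 3 - 100*u 0*u 1, 10*(u 0)^2 + 10*u 2, 10*u 1]

lemma pd_X1 (u : Fin 5 → ℝ) (i j : Fin 5) : pd (fun v => X1 v i) u j = jacX1 u i j := by
  fin_cases i <;>
  · simp (disch := fun_prop) only [X1, Fin.zero_eta, Fin.mk_one, Fin.reduceFinMk,
      Matrix.cons_val, Matrix.cons_val_zero, Matrix.cons_val_one, pd_add, pd_sub, pd_mul,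
      pd_pow, pd_coord, pd_const]
    fin_cases j <;>
      simp only [jacX1, Fin.zero_eta, Fin.mk_one, Fin.reduceFinMk, Fin.isValue, Fin.reduceEq,
        reduceIte, Matrix.of_apply, Matrix.cons_val, Matrix.cons_val_zero, Matrix.cons_val_one,
        Nat.cast_ofNat, Nat.reduceSub] <;>
      ring

lemma pd_X3 (u : Fin 5 → ℝ) (i j : Fin 5) : pd (fun v => X3 v i) u j = jacX3 u i j := by
  fin_cases i <;>
  · simp (disch := fun_prop) only [X3, Fin.zero_eta, Fin.mk_one, Fin.reduceFinMk,
      Matrix.cons_val, Matrix.cons_val_zero, Matrix.cons_val_one, pd_add, pd_sub, pd_mul,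
      pd_pow, pd_coord, pd_const]
    fin_cases j <;>
      simp only [jacX3, Fin.zero_eta, Fin.mk_one, Fin.reduceFinMk, Fin.isValue, Fin.reduceEq,
        reduceIte, Matrix.smul_apply, Matrix.of_apply, Matrix.cons_val, Matrix.cons_val_zero,
        Matrix.cons_val_one, Nat.cast_ofNat, Nat.reduceSub, smul_eq_mul] <;>
      ring

lemma jacX3_mulVec_X1 (u : Fin 5 → ℝ) : jacX3 u *ᵥ X1 u = jacX1 u *ᵥ X3 u := by
  ext i
  fin_cases i <;>
  · simp [Matrix.mulVec, dotProduct, Fin.sum_univ_five, X1, X3, jacX1, jacX3]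
    ring

/-- The vector fields `X₁` and `X₃` of the stationary KdV₅ system commute. -/
theorem stmt2 :
    ∀ u : Fin 5 → ℝ, ∀ i : Fin 5,
      ∑ j, (X1 u j * pd (fun v => X3 v i) u j - X3 u j * pd (fun v => X1 v i) u j) = 0 := by
  intro u i
  change lieBracket X1 X3 u i = 0
  rw [lieBracket_eq_mulVec_sub_mulVec (pd_X1 u) (pd_X3 u), jacX3_mulVec_X1, sub_self,
    Pi.zero_apply]
end
end

section
/- The function H_2 = u_4 - 10u_0u_2 - 5u_1^2 + 10u_0^3 is a Casimir of P_0: the vector P_0 · dH_2 vanishes identically, where dH_2 is the gradient (∂H_2/∂u_0, ..., ∂H_2/∂u_4). -/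
noncomputable section

def gradH2 (u : Fin 5 → ℝ) : Fin 5 → ℝ :=
  ![30*(u 0)^2 - 10*u 2, -10*u 1, -10*u 0, 0, 1]

lemma pd_eq_of_hasFDerivAt {H : (Fin 5 → ℝ) → ℝ} {u g : Fin 5 → ℝ}
    (h : HasFDerivAt H (∑ j, g j • (ContinuousLinearMap.proj j : (Fin 5 → ℝ) →L[ℝ] ℝ)) u)
    (i : Fin 5) :
    pd H u i = g i := by
  simp [pd, h.fderiv, Pi.single_apply]

lemma hasFDerivAt_H2 (u : Fin 5 → ℝ) :
    HasFDerivAt H2 (∑ j, gradH2 u j • (ContinuousLinearMap.proj j : (Fin 5 → ℝ) →L[ℝ] ℝ)) u := by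
  have h (i : Fin 5) := hasFDerivAt_apply (𝕜 := ℝ) i u
  refine (((h 4).sub (((h 0).const_mul 10).mul (h 2))).sub (((h 1).pow 2).const_mul 5)
    |>.add (((h 0).pow 3).const_mul 10)).congr_fderiv ?_
  ext v
  simp only [gradH2, Fin.sum_univ_five, add_apply, sub_apply, smul_apply, smul_eq_mul,
    ContinuousLinearMap.proj_apply, nsmul_eq_mul, Matrix.cons_val, Nat.cast_ofNat]
  ring

lemma P0_mulVec_gradH2 (u : Fin 5 → ℝ) : (P0 u).mulVec (gradH2 u) = 0 := by
  ext i
  fin_cases i <;> simp [P0, gradH2, Matrix.mulVec, dotProduct, Fin.sum_univ_five] <;> ring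

/-- `H₂` is a Casimir of `P₀`: `P₀ · dH₂ = 0`. -/
theorem stmt6 :
    ∀ u : Fin 5 → ℝ, ∀ i : Fin 5, ∑ j, P0 u i j * pd H2 u j = 0 := by
  intro u i
  simp only [pd_eq_of_hasFDerivAt (hasFDerivAt_H2 u)]
  exact congrFun (P0_mulVec_gradH2 u) i
end
end

section
/- The function H_0 = (1/16)(-2u_2u_4 + 6u_0^2u_4 + u_3^2 - 12u_0u_1u_3 + 16u_0u_2^2 + 12u_1^2u_2 - 60u_0^3u_2 + 36u_0^5) is a Casimir of P_1: P_1 · dH_0 = 0 identically. -/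
/-! The partial derivatives of the polynomial `H₀` are derivatives of its one-variable slices,
and `P₁ · dH₀ = 0` is then a polynomial identity in each row. -/

noncomputable section

theorem pd_eq_deriv_update {H : (Fin 5 → ℝ) → ℝ} {u : Fin 5 → ℝ}
    (hH : DifferentiableAt ℝ H u) (i : Fin 5) : pd H u i = deriv (fun t => H (Function.update u i t)) (u i) :=
  (hH.hasFDerivAt.comp_hasDerivAt_of_eq (u i) (hasDerivAt_update u i (u i))
    (Function.update_eq_self i u).symm).deriv.symm

theorem pd_H0 (u : Fin 5 → ℝ) :
    pd H0 u = ![(1/16)*(12*u 0*u 4 - 12*u 1*u 3 + 16*(u 2)^2 - 180*(u 0)^2*u 2 + 180*(u 0)^4),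
      (1/16)*(-12*u 0*u 3 + 24*u 1*u 2),
      (1/16)*(-2*u 4 + 32*u 0*u 2 + 12*(u 1)^2 - 60*(u 0)^3),
      (1/16)*(2*u 3 - 12*u 0*u 1),
      (1/16)*(-2*u 2 + 6*(u 0)^2)] := by
  have hH0 : Differentiable ℝ H0 := by unfold H0; fun_prop
  funext j
  rw [pd_eq_deriv_update (hH0 u)]
  fin_cases j <;>
    simp (disch := fun_prop) [H0, Function.update_apply, -mul_eq_mul_left_iff] <;> ring

/-- `H₀` is a Casimir of `P₁`: `P₁ · dH₀ = 0`. -/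
theorem stmt7 :
    ∀ u : Fin 5 → ℝ, ∀ i : Fin 5, ∑ j, P1 u i j * pd H0 u j = 0 := by
  intro u i
  rw [pd_H0]
  fin_cases i <;> simp [P1, Fin.sum_univ_five] <;> ring
end
end

section
/- The vector field X_1 of the stationary KdV_5 system is bi-Hamiltonian: X_1 = P_0 · dH_1 = P_1 · dH_2, where both equalities hold identically as polynomial identities on R^5. -/
noncomputable section

/-! Both Hamiltonians are polynomial functions, so their partial derivatives are evaluations of
formal partial derivatives `MvPolynomial.pderiv`. This makes the gradients `dH₁`, `dH₂` explicit,
and both identities become polynomial identities, checked entry by entry. -/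

open MvPolynomial

theorem MvPolynomial.hasFDerivAt_eval {𝕜 σ : Type*} [NontriviallyNormedField 𝕜] [Fintype σ]
    (p : MvPolynomial σ 𝕜) (x : σ → 𝕜) :
    HasFDerivAt (𝕜 := 𝕜) (fun y => eval y p)
      (∑ i, eval x (pderiv i p) • ContinuousLinearMap.proj i) x := by
  classical
  induction p using MvPolynomial.induction_on with
  | C a =>
    simp only [eval_C]
    refine HasFDerivAt.congr_fderiv (hasFDerivAt_const _ _) ?_
    ext v
    simp
  | add p q hp hq =>
    simp only [map_add]
    refine (hp.fun_add hq).congr_fderiv ?_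
    ext v
    simp [add_mul, Finset.sum_add_distrib]
  | mul_X p i hp =>
    simp only [map_mul, eval_X]
    refine (hp.fun_mul (hasFDerivAt_apply i x)).congr_fderiv ?_
    ext v
    simp [pderiv_X, Pi.single_apply, apply_ite (eval x), mul_add, Finset.sum_add_distrib,
      Finset.mul_sum, mul_comm, mul_left_comm]

theorem MvPolynomial.fderiv_eval_apply_single {𝕜 σ : Type*} [NontriviallyNormedField 𝕜]
    [Fintype σ] [DecidableEq σ] (p : MvPolynomial σ 𝕜) (x : σ → 𝕜) (i : σ) :
    fderiv 𝕜 (fun y => eval y p) x (Pi.single i 1) = eval x (pderiv i p) := by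
  simp [(p.hasFDerivAt_eval x).fderiv, Pi.single_apply]

lemma pd_H1 (u : Fin 5 → ℝ) :
    pd H1 u = ![-(1/4) * (2*u 4 - 40*u 0*u 2 + 60*(u 0)^3), u 3 / 2,
      -(1/4) * (2*u 2 - 20*(u 0)^2), u 1 / 2, -(u 0) / 2] := by
  have hH1 : H1 = fun v => eval v (C (-(1/4)) * (C 2 * X 0 * X 4 - C 2 * X 1 * X 3 + X 2 ^ 2
      - C 20 * X 0 ^ 2 * X 2 + C 15 * X 0 ^ 4)) := by
    funext v
    simp [H1]
  ext j
  rw [pd, hH1, fderiv_eval_apply_single]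
  fin_cases j <;>
    simp only [Derivation.leibniz, Derivation.leibniz_pow, derivation_C, pderiv_X, Pi.single_apply,
      map_add, map_sub, map_mul, map_pow, map_zero, map_one, map_natCast, eval_X, eval_C,
      smul_eq_mul, nsmul_eq_mul, Fin.isValue, Fin.reduceEq, Fin.reduceFinMk, reduceIte,
      Matrix.cons_val] <;>
    ring

lemma pd_H2 (u : Fin 5 → ℝ) :
    pd H2 u = ![-10*u 2 + 30*(u 0)^2, -10*u 1, -10*u 0, 0, 1] := by
  have hH2 : H2 = fun v => eval v (X 4 - C 10 * X 0 * X 2 - C 5 * X 1 ^ 2 + C 10 * X 0 ^ 3) := by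
    funext v
    simp [H2]
  ext j
  rw [pd, hH2, fderiv_eval_apply_single]
  fin_cases j <;>
    simp only [Derivation.leibniz, Derivation.leibniz_pow, derivation_C, pderiv_X, Pi.single_apply,
      map_add, map_sub, map_mul, map_pow, map_zero, map_one, map_natCast, eval_X, eval_C,
      smul_eq_mul, nsmul_eq_mul, Fin.isValue, Fin.reduceEq, Fin.reduceFinMk, reduceIte,
      Matrix.cons_val] <;>
    ring

/-- `X₁` is bi-Hamiltonian: `X₁ = P₀ · dH₁ = P₁ · dH₂`. -/
theorem stmt8 :
    ∀ u : Fin 5 → ℝ, ∀ i : Fin 5,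
      X1 u i = ∑ j, P0 u i j * pd H1 u j ∧
      X1 u i = ∑ j, P1 u i j * pd H2 u j := by
  intro u i
  rw [pd_H1, pd_H2]
  fin_cases i <;> constructor <;>
    simp only [X1, P0, P1, Fin.sum_univ_five, Matrix.of_apply, Matrix.cons_val,
      Matrix.cons_val_zero, Matrix.cons_val_one, Fin.isValue, Fin.reduceFinMk] <;>
    ring
end
end

section
/- Let g be a Lie algebra of matrices with nondegenerate trace form, A ∈ g fixed, and M_A the space of matrix polynomials X(λ) = λ^{n+1}A + sum_{i=0}^n λ^i X_i with X_i ∈ g. Let P_λ = P_1 - λP_0 be the Poisson pencil on M_A defined by the tensors P_0, P_1 whose block entries are the commutator maps described below. Then for any function F on M_A, the Hamiltonian vector field P_λ dF, evaluated with the pencil parameter identified with the λ in X(λ), equals [∂F/∂X_0, X(λ)]; i.e., it has Lax form with generator the X_0-partial of F. -/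
/-! Write `W = dF X` and sum `λ^i (P₁W)_i - λ^{i+1} (P₀W)_i` column by column. For `j ≥ 1`, after the shift `i ↦ i + 1` the `λ`-weighted Hankel column of `P₀`
is that of `P₁` plus the single term `λ^{n+1}[X_{n+1+j}, W_j]`, which vanishes because the
coefficients of `X(λ)` stop at `λ^{n+1}`; so these columns cancel. The column of `W₀` leaves
`-[X₀, W₀] - ∑_{k ≥ 1} λ^k [X_k, W₀] = [W₀, X(λ)]`. -/

noncomputable section

attribute [local instance] Matrix.normedAddCommGroup Matrix.normedSpace
attribute [local instance 100] LieRing.ofAssociativeRing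

/-- The coefficients of the matrix polynomial `X(λ) = λ^{n+1}A + ∑_{i=0}^n λ^i Xᵢ`,
extended by `X_{n+1} := A` and `X_k := 0` for `k > n+1`. -/
def Xext {m : ℕ} (n : ℕ) (A : Matrix (Fin m) (Fin m) ℝ)
    (X : Fin (n+1) → Matrix (Fin m) (Fin m) ℝ) (k : ℕ) : Matrix (Fin m) (Fin m) ℝ :=
  if h : k ≤ n then X ⟨k, by omega⟩ else if k = n + 1 then A else 0

/-- The matrix polynomial `X(λ) = λ^{n+1}A + ∑_{i=0}^n λ^i Xᵢ`. -/
def Xpoly {m : ℕ} (n : ℕ) (A : Matrix (Fin m) (Fin m) ℝ)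
    (X : Fin (n+1) → Matrix (Fin m) (Fin m) ℝ) (lam : ℝ) : Matrix (Fin m) (Fin m) ℝ :=
  ∑ k ∈ Finset.range (n+2), lam^k • Xext n A X k

/-- The first Poisson tensor `P₀` on `M_A`: the Hankel-type block matrix of
commutator maps `[X_{i+j+1}, ·]` (with `X_{n+1} = A` and higher coefficients zero),
applied to a covector `W`. -/
def P0map {m : ℕ} (n : ℕ) (A : Matrix (Fin m) (Fin m) ℝ)
    (X W : Fin (n+1) → Matrix (Fin m) (Fin m) ℝ) : Fin (n+1) → Matrix (Fin m) (Fin m) ℝ :=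
  fun i => ∑ j : Fin (n+1),
    (Xext n A X ((i:ℕ)+(j:ℕ)+1) * W j - W j * Xext n A X ((i:ℕ)+(j:ℕ)+1))

/-- The second Poisson tensor `P₁` on `M_A`: the `(0,0)` block is `-[X₀, ·]`, the rest of
the first row and column vanish, and the inner block is the shifted Hankel matrix of
commutator maps `[X_{i+j}, ·]`, applied to a covector `W`. -/
def P1map {m : ℕ} (n : ℕ) (A : Matrix (Fin m) (Fin m) ℝ)
    (X W : Fin (n+1) → Matrix (Fin m) (Fin m) ℝ) : Fin (n+1) → Matrix (Fin m) (Fin m) ℝ :=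
  fun i =>
    if (i:ℕ) = 0 then -(X 0 * W 0 - W 0 * X 0)
    else ∑ j : Fin (n+1),
      if (j:ℕ) = 0 then 0
      else Xext n A X ((i:ℕ)+(j:ℕ)) * W j - W j * Xext n A X ((i:ℕ)+(j:ℕ))

section PoissonPencil

variable {m n : ℕ} (A : Matrix (Fin m) (Fin m) ℝ) (X W : Fin (n+1) → Matrix (Fin m) (Fin m) ℝ)
  (lam : ℝ)

theorem Xext_zero : Xext n A X 0 = X 0 := by
  simp [Xext]

theorem Xext_eq_zero_of_lt {k : ℕ} (hk : n + 1 < k) : Xext n A X k = 0 := by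
  rw [Xext, dif_neg (by omega), if_neg (by omega)]

theorem Xpoly_eq_add_sum : Xpoly n A X lam
    = X 0 + ∑ i : Fin (n+1), lam^((i:ℕ)+1) • Xext n A X ((i:ℕ)+1) := by
  rw [Xpoly, Finset.sum_range_succ', Fin.sum_univ_eq_sum_range
    (fun i => lam^(i+1) • Xext n A X (i+1)), pow_zero, one_smul, Xext_zero, add_comm]

theorem P0map_eq_sum_lie (i : Fin (n+1)) :
    P0map n A X W i = ∑ j : Fin (n+1), ⁅Xext n A X ((i:ℕ)+(j:ℕ)+1), W j⁆ := rfl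

theorem P1map_zero : P1map n A X W 0 = ⁅W 0, X 0⁆ := by
  simp only [P1map, Fin.val_zero, if_true, neg_sub, Ring.lie_def]

theorem P1map_succ (i : Fin n) :
    P1map n A X W i.succ = ∑ j : Fin n, ⁅Xext n A X ((i:ℕ)+1+((j:ℕ)+1)), W j.succ⁆ := by
  simp only [P1map, Fin.val_succ, Nat.succ_ne_zero, if_false, Fin.sum_univ_succ, Fin.val_zero,
    if_true, zero_add, Ring.lie_def]

def weightedP0Column (j : Fin (n+1)) : Matrix (Fin m) (Fin m) ℝ :=
  ∑ i : Fin (n+1), lam^((i:ℕ)+1) • ⁅Xext n A X ((i:ℕ)+1+(j:ℕ)), W j⁆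

theorem sum_pow_succ_smul_P0map :
    ∑ i : Fin (n+1), lam^((i:ℕ)+1) • P0map n A X W i
      = ∑ j : Fin (n+1), weightedP0Column A X W lam j := by
  simp only [P0map_eq_sum_lie, weightedP0Column, Finset.smul_sum]
  rw [Finset.sum_comm]
  refine Finset.sum_congr rfl fun j _ => Finset.sum_congr rfl fun i _ => ?_
  rw [add_right_comm]

theorem sum_pow_smul_P1map :
    ∑ i : Fin (n+1), lam^(i:ℕ) • P1map n A X W i
      = ⁅W 0, X 0⁆ + ∑ j : Fin n, ∑ i : Fin n,
          lam^((i:ℕ)+1) • ⁅Xext n A X ((i:ℕ)+1+((j:ℕ)+1)), W j.succ⁆ := by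
  simp only [Fin.sum_univ_succ (n := n), P1map_zero, P1map_succ, Fin.val_zero, pow_zero, one_smul,
    Fin.val_succ, Finset.smul_sum]
  rw [Finset.sum_comm]

theorem weightedP0Column_succ (j : Fin n) :
    weightedP0Column A X W lam j.succ
      = ∑ i : Fin n, lam^((i:ℕ)+1) • ⁅Xext n A X ((i:ℕ)+1+((j:ℕ)+1)), W j.succ⁆ := by
  rw [weightedP0Column, Fin.sum_univ_castSucc]
  simp only [Fin.val_castSucc, Fin.val_last, Fin.val_succ,
    Xext_eq_zero_of_lt A X (show n + 1 < n + 1 + ((j:ℕ) + 1) by omega), zero_lie, smul_zero,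
    add_zero]

theorem weightedP0Column_zero :
    weightedP0Column A X W lam 0 = ⁅Xpoly n A X lam - X 0, W 0⁆ := by
  simp only [weightedP0Column, Xpoly_eq_add_sum, add_sub_cancel_left, sum_lie, smul_lie,
    Fin.val_zero, add_zero]

theorem sum_pow_smul_pencil_eq_lie :
    ∑ i : Fin (n+1), lam^(i:ℕ) • (P1map n A X W i - lam • P0map n A X W i)
      = ⁅W 0, Xpoly n A X lam⁆ := by
  simp only [smul_sub, smul_smul, ← pow_succ, Finset.sum_sub_distrib, sum_pow_smul_P1map,
    sum_pow_succ_smul_P0map, Fin.sum_univ_succ (f := weightedP0Column A X W lam),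
    weightedP0Column_succ, weightedP0Column_zero]
  rw [sub_lie, ← lie_skew (Xpoly n A X lam), ← lie_skew (X 0)]
  abel

end PoissonPencil

theorem stmt14_general {m n : ℕ}
    (A : Matrix (Fin m) (Fin m) ℝ)
    (dF : (Fin (n+1) → Matrix (Fin m) (Fin m) ℝ) → Fin (n+1) → Matrix (Fin m) (Fin m) ℝ)
    (X : Fin (n+1) → Matrix (Fin m) (Fin m) ℝ) (lam : ℝ) :
    ∑ i : Fin (n+1),
        lam^(i:ℕ) • (P1map n A X (dF X) i - lam • P0map n A X (dF X) i)
      = dF X 0 * Xpoly n A X lam - Xpoly n A X lam * dF X 0 :=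
  sum_pow_smul_pencil_eq_lie A X (dF X) lam

/-- On the bi-Hamiltonian manifold `M_A` of `g`-valued matrix polynomials (`g` a Lie
algebra of matrices with nondegenerate trace form, `A ∈ g` fixed), every Hamiltonian
vector field of the Poisson pencil `P_λ = P₁ - λP₀` has Lax form: for a function `F`
with gradient `dF = (∂F/∂X₀,…,∂F/∂Xₙ)` with respect to the trace pairing, identifying
the pencil parameter with the `λ` in `X(λ)` gives `P_λ dF = [∂F/∂X₀, X(λ)]`. -/
theorem stmt14 {m n : ℕ} (g : LieSubalgebra ℝ (Matrix (Fin m) (Fin m) ℝ))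
    (htr : ∀ a ∈ g, (∀ b ∈ g, (a * b).trace = 0) → a = 0)
    (A : Matrix (Fin m) (Fin m) ℝ) (hA : A ∈ g)
    (F : (Fin (n+1) → Matrix (Fin m) (Fin m) ℝ) → ℝ)
    (dF : (Fin (n+1) → Matrix (Fin m) (Fin m) ℝ) → Fin (n+1) → Matrix (Fin m) (Fin m) ℝ)
    (hdF : ∀ X V, fderiv ℝ F X V = ∑ i, (dF X i * V i).trace)
    (hdFg : ∀ X, (∀ i, X i ∈ g) → ∀ i, dF X i ∈ g)
    (X : Fin (n+1) → Matrix (Fin m) (Fin m) ℝ) (hX : ∀ i, X i ∈ g) (lam : ℝ) :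
    ∑ i : Fin (n+1),
        lam^(i:ℕ) • (P1map n A X (dF X) i - lam • P0map n A X (dF X) i)
      = dF X 0 * Xpoly n A X lam - Xpoly n A X lam * dF X 0 :=
  stmt14_general A dF X lam
end
end
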